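/- Let q(dy|x,s) be a conservative stable Q-function on a Borel space S. Define recursively, for x ∈ S, 0 ≤ s ≤ t, Γ ∈ B(S): p^{(0)}(s,x,t,Γ) := δ_x(Γ) e^{−∫_s^t q_x(v) dv}, and p^{(n+1)}(s,x,t,Γ) := ∫_s^t e^{−∫_s^u q_x(v) dv} ∫_S p^{(n)}(u,z,t,Γ) q̃(dz|x,u) du. Then for every n ≥ 0, x ∈ S, s ≤ t: (i) p^{(n)}(s,x,t,Γ) ≥ 0; (ii) Σ_{k=0}^n p^{(k)}(s,x,t,S) ≤ 1; hence the Feller construction p_q(s,x,t,Γ) := Σ_{n=0}^∞ p^{(n)}(s,x,t,Γ) defines a substochastic kernel: p_q(s,x,t,S) ≤ 1. -/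

import Mathlib

/-! With `F(u) = ∫_s^u q_x`, the total mass `P_n(s,x) = ∑_{k<n} p^{(k)}(s,x,t,S)` satisfies
`P_{n+1}(s,x) ≤ e^{-F(t)} + ∫_s^t e^{-F(u)} ∫ P_n(u,z) q̃(dz|x,u) du`. If `P_n ≤ 1`, the inner
integral is at most `q̃(S|x,u) = q_x(u) = F'(u)` (for a.e. `u`), and since `-e^{-F}` is absolutely
continuous the outer integral is `1 - e^{-F(t)}`; so `P_n ≤ 1` propagates by induction on `n`, and
the series bound follows by letting `n → ∞`. -/

open MeasureTheory Set Filter Real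
open scoped ENNReal NNReal Interval

theorem LipschitzOnWith.comp_absolutelyContinuousOnInterval {X Y : Type*} [PseudoMetricSpace X]
    [PseudoMetricSpace Y] {g : X → Y} {K : ℝ≥0} {A : Set X} {f : ℝ → X} {a b : ℝ}
    (hg : LipschitzOnWith K g A) (hf : AbsolutelyContinuousOnInterval f a b)
    (hfA : MapsTo f (uIcc a b) A) : AbsolutelyContinuousOnInterval (g ∘ f) a b := by
  unfold AbsolutelyContinuousOnInterval at hf ⊢
  refine squeeze_zero' (Eventually.of_forall fun _ ↦ Finset.sum_nonneg fun _ _ ↦ dist_nonneg) ?_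
    (by simpa using hf.const_mul (K : ℝ))
  rw [eventually_inf_principal]
  filter_upwards with E hE
  rw [Finset.mul_sum]
  gcongr with i hi
  exact hg.dist_le_mul _ (hfA (hE.1 i hi).1) _ (hfA (hE.1 i hi).2)

theorem lipschitzOnWith_exp_neg : LipschitzOnWith 1 (fun y : ℝ ↦ exp (-y)) (Ici 0) := by
  refine (convex_Ici 0).lipschitzOnWith_of_nnnorm_hasDerivWithin_le
    (fun y _ ↦ ((hasDerivAt_neg y).exp).hasDerivWithinAt) fun y hy ↦ ?_
  rw [← NNReal.coe_le_coe, coe_nnnorm, norm_mul, norm_neg, norm_one, mul_one, Real.norm_eq_abs,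
    abs_of_pos (exp_pos _), NNReal.coe_one, exp_le_one_iff, neg_nonpos]
  exact hy

theorem integral_nonneg_of_forall_mem_Icc {f : ℝ → ℝ} {s t u : ℝ}
    (hf0 : ∀ v ∈ Icc s t, 0 ≤ f v) (hu : u ∈ Icc s t) : 0 ≤ ∫ v in s..u, f v :=
  intervalIntegral.integral_nonneg hu.1 fun v hv ↦ hf0 v ⟨hv.1, hv.2.trans hu.2⟩

theorem integral_exp_neg_integral_mul_eq {f : ℝ → ℝ} {s t : ℝ} (hst : s ≤ t)
    (hf : IntervalIntegrable f volume s t) (hf0 : ∀ u ∈ Icc s t, 0 ≤ f u) :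
    ∫ u in s..t, exp (-∫ v in s..u, f v) * f u = 1 - exp (-∫ v in s..t, f v) := by
  set F : ℝ → ℝ := fun u ↦ ∫ v in s..u, f v
  have hF0 : MapsTo F (uIcc s t) (Ici 0) := fun u hu ↦
    integral_nonneg_of_forall_mem_Icc hf0 (uIcc_of_le hst ▸ hu)
  have hG : AbsolutelyContinuousOnInterval (fun u ↦ -exp (-F u)) s t :=
    (lipschitzOnWith_exp_neg.comp_absolutelyContinuousOnInterval
      (hf.absolutelyContinuousOnInterval_intervalIntegral left_mem_uIcc) hF0).neg
  have hderiv : ∀ᵐ u, u ∈ Ι s t → deriv (fun u ↦ -exp (-F u)) u = exp (-F u) * f u := by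
    filter_upwards [hf.ae_hasDerivAt_integral] with u hu hmem
    have hFu : HasDerivAt F (f u) u := hu (uIoc_subset_uIcc hmem) s left_mem_uIcc
    exact (hFu.neg.exp.neg.congr_deriv (by rw [Pi.neg_apply]; ring)).deriv
  rw [← intervalIntegral.integral_congr_ae hderiv, hG.integral_deriv_eq_sub]
  simp only [F, intervalIntegral.integral_same, neg_zero, exp_zero]
  ring

theorem lintegral_exp_neg_integral_mul_eq {f : ℝ → ℝ} {s t : ℝ} (hst : s ≤ t)
    (hf : IntervalIntegrable f volume s t) (hf0 : ∀ u ∈ Icc s t, 0 ≤ f u) :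
    ∫⁻ u in Ioc s t, ENNReal.ofReal (exp (-∫ v in s..u, f v)) * ENNReal.ofReal (f u)
      = ENNReal.ofReal (1 - exp (-∫ v in s..t, f v)) := by
  have hcont : ContinuousOn (fun u ↦ exp (-∫ v in s..u, f v)) (Ioc s t) :=
    (hf.absolutelyContinuousOnInterval_intervalIntegral left_mem_uIcc).continuousOn.neg.rexp.mono
      (uIoc_of_le hst ▸ uIoc_subset_uIcc)
  have hint : IntegrableOn (fun u ↦ exp (-∫ v in s..u, f v) * f u) (Ioc s t) := by
    refine hf.1.bdd_mul (c := 1) (hcont.aestronglyMeasurable measurableSet_Ioc) ?_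
    filter_upwards [ae_restrict_mem measurableSet_Ioc] with u hu
    rw [norm_of_nonneg (exp_pos _).le, exp_le_one_iff, neg_nonpos]
    exact integral_nonneg_of_forall_mem_Icc hf0 (Ioc_subset_Icc_self hu)
  simp_rw [← ENNReal.ofReal_mul (exp_pos _).le]
  rw [← ofReal_integral_eq_lintegral_ofReal hint, ← intervalIntegral.integral_of_le hst,
    integral_exp_neg_integral_mul_eq hst hf hf0]
  filter_upwards [ae_restrict_mem measurableSet_Ioc] with u hu
  exact mul_nonneg (exp_pos _).le (hf0 u (Ioc_subset_Icc_self hu))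

theorem sum_lintegral_le_lintegral_sum {α ι : Type*} [MeasurableSpace α] {μ : Measure α}
    (s : Finset ι) (g : ι → α → ℝ≥0∞) :
    ∑ i ∈ s, ∫⁻ a, g i a ∂μ ≤ ∫⁻ a, ∑ i ∈ s, g i a ∂μ := by
  classical
  induction s using Finset.induction_on with
  | empty => simp
  | insert i s hi ih =>
    simp_rw [Finset.sum_insert hi]
    exact (add_le_add_right ih _).trans (le_lintegral_add _ _)

/-- The Feller construction for a (possibly nonhomogeneous) conservative stable Q-function:
`qt u x` is the off-diagonal jump measure `q̃(dz|x,u)`, `qx u x = q_x(u)`, and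
`p^{(0)}(s,x,t,Γ) = δ_x(Γ) e^{-∫_s^t q_x(v)dv}`,
`p^{(n+1)}(s,x,t,Γ) = ∫_s^t e^{-∫_s^u q_x(v)dv} ∫_S p^{(n)}(u,z,t,Γ) q̃(dz|x,u) du`. -/
noncomputable def feller {S : Type*} [MeasurableSpace S]
    (qt : ℝ → S → Measure S) (qx : ℝ → S → ℝ) :
    ℕ → ℝ → S → ℝ → Set S → ℝ≥0∞
  | 0 => fun s x t Γ =>
      Measure.dirac x Γ * ENNReal.ofReal (Real.exp (-(∫ v in s..t, qx v x)))
  | (n+1) => fun s x t Γ =>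
      ∫⁻ u in Set.Ioc s t,
        ENNReal.ofReal (Real.exp (-(∫ v in s..u, qx v x)))
          * ∫⁻ z, feller qt qx n u z t Γ ∂ qt u x

section Feller

variable {S : Type*} [MeasurableSpace S] {qt : ℝ → S → Measure S} {qx : ℝ → S → ℝ}

theorem feller_zero_univ (s t : ℝ) (x : S) :
    feller qt qx 0 s x t univ = ENNReal.ofReal (exp (-∫ v in s..t, qx v x)) := by
  simp [feller]

theorem sum_range_feller_succ_univ_le {n : ℕ} {s t : ℝ} {x : S}
    (h : ∀ u ∈ Ioc s t, ∀ z, ∑ k ∈ Finset.range n, feller qt qx k u z t univ ≤ 1) :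
    ∑ k ∈ Finset.range n, feller qt qx (k + 1) s x t univ
      ≤ ∫⁻ u in Ioc s t, ENNReal.ofReal (exp (-∫ v in s..u, qx v x)) * qt u x univ := by
  refine (sum_lintegral_le_lintegral_sum _ _).trans
    (setLIntegral_mono' measurableSet_Ioc fun u hu ↦ ?_)
  rw [← Finset.mul_sum]
  gcongr
  calc ∑ k ∈ Finset.range n, ∫⁻ z, feller qt qx k u z t univ ∂qt u x
      ≤ ∫⁻ z, ∑ k ∈ Finset.range n, feller qt qx k u z t univ ∂qt u x :=
        sum_lintegral_le_lintegral_sum _ _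
    _ ≤ ∫⁻ _, 1 ∂qt u x := lintegral_mono (h u hu)
    _ = qt u x univ := lintegral_one

theorem sum_range_feller_univ_le_one (hq0 : ∀ u x, 0 ≤ qx u x)
    (hcons : ∀ u x, qt u x univ = ENNReal.ofReal (qx u x))
    (hint : ∀ x s t, IntervalIntegrable (fun u ↦ qx u x) volume s t) (n : ℕ) {s t : ℝ}
    (hst : s ≤ t) (x : S) : ∑ k ∈ Finset.range n, feller qt qx k s x t univ ≤ 1 := by
  induction n generalizing s x with
  | zero => simp
  | succ n ih =>
    have hexp : exp (-∫ v in s..t, qx v x) ≤ 1 := by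
      rw [exp_le_one_iff, neg_nonpos]
      exact intervalIntegral.integral_nonneg hst fun u _ ↦ hq0 u x
    rw [Finset.sum_range_succ', feller_zero_univ]
    calc ∑ k ∈ Finset.range n, feller qt qx (k + 1) s x t univ
          + ENNReal.ofReal (exp (-∫ v in s..t, qx v x))
        ≤ (∫⁻ u in Ioc s t,
              ENNReal.ofReal (exp (-∫ v in s..u, qx v x)) * ENNReal.ofReal (qx u x))
          + ENNReal.ofReal (exp (-∫ v in s..t, qx v x)) := by
          gcongr
          simpa only [hcons] using sum_range_feller_succ_univ_le fun u hu ↦ ih hu.2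
      _ = 1 := by
          rw [lintegral_exp_neg_integral_mul_eq hst (hint x s t) fun u _ ↦ hq0 u x,
            ← ENNReal.ofReal_add (sub_nonneg.2 hexp) (exp_pos _).le, sub_add_cancel,
            ENNReal.ofReal_one]

end Feller

theorem stmt7_general {S : Type*} [MeasurableSpace S]
    (qt : ℝ → S → Measure S) (qx : ℝ → S → ℝ)
    (hq0 : ∀ u x, 0 ≤ qx u x)
    (hcons : ∀ u x, qt u x Set.univ = ENNReal.ofReal (qx u x))
    (hstable : ∀ x, ∃ C : ℝ, ∀ u, qx u x ≤ C)
    (hmeas : ∀ x, Measurable fun u => qx u x) :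
    ∀ (n : ℕ) (s t : ℝ) (x : S) (Γ : Set S), s ≤ t →
      (0 ≤ feller qt qx n s x t Γ) ∧
      (∑ k ∈ Finset.range (n + 1), feller qt qx k s x t Set.univ) ≤ 1 ∧
      (∑' k : ℕ, feller qt qx k s x t Set.univ) ≤ 1 := by
  intro n s t x Γ hst
  have hint : ∀ x s t, IntervalIntegrable (fun u ↦ qx u x) volume s t := fun x s t ↦ by
    obtain ⟨C, hC⟩ := hstable x
    refine (intervalIntegrable_const (c := C)).mono_fun' (hmeas x).aestronglyMeasurable
      (ae_of_all _ fun u ↦ ?_)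
    show ‖qx u x‖ ≤ C
    rw [norm_of_nonneg (hq0 u x)]
    exact hC u
  have hsum (m : ℕ) := sum_range_feller_univ_le_one hq0 hcons hint m hst x
  exact ⟨zero_le, hsum (n + 1), ENNReal.tsum_le_of_sum_range_le hsum⟩

/-- each term of the Feller construction is nonnegative, the partial sums of
the total masses are at most 1, and hence `p_q(s,x,t,S) = Σ_n p^{(n)}(s,x,t,S) ≤ 1`. -/
theorem stmt7 {S : Type*} [MeasurableSpace S]
    (qt : ℝ → S → Measure S) (qx : ℝ → S → ℝ)
    (hq0 : ∀ u x, 0 ≤ qx u x)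
    (hcons : ∀ u x, qt u x Set.univ = ENNReal.ofReal (qx u x))
    (hdiag : ∀ u x, qt u x {x} = 0)
    (hstable : ∀ x, ∃ C : ℝ, ∀ u, qx u x ≤ C)
    (hmeas : ∀ x, Measurable fun u => qx u x) :
    ∀ (n : ℕ) (s t : ℝ) (x : S) (Γ : Set S), s ≤ t →
      (0 ≤ feller qt qx n s x t Γ) ∧
      (∑ k ∈ Finset.range (n + 1), feller qt qx k s x t Set.univ) ≤ 1 ∧
      (∑' k : ℕ, feller qt qx k s x t Set.univ) ≤ 1 :=
  stmt7_general qt qx hq0 hcons hstable hmeas
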